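/- Let $g\in\mathbb{R}^n$ with $g_n>0$ and $|g|>0$. Set $\xi^{(n)} = g/|g|$ and for $i=1,\dots,n-1$ set $\xi^{(i)} = (g_n e_i - g_i e_n)/|g_n e_i - g_i e_n|$, where $e_1,\dots,e_n$ is the standard basis. Then the determinant of the matrix with columns $\xi^{(1)},\dots,\xi^{(n-1)},\xi^{(n)}$ satisfies $\det(\xi^{(1)},\dots,\xi^{(n)}) \ge (g_n/|g|)^{n-2} > 0$. -/

import Mathlib

/-!
Up to the positive column scalings `‖g‖⁻¹` and `‖gₙ eᵢ - gᵢ eₙ‖⁻¹`, the matrix has columns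
`gₙ eᵢ - gᵢ eₙ` (`i < n`) and `g`. Replacing `g` by `gₙ g - ∑ᵢ gᵢ (gₙ eᵢ - gᵢ eₙ) = ‖g‖² eₙ`
multiplies the determinant by `gₙ` and makes the matrix triangular, so the unscaled determinant
is `gₙ^(n-2) ‖g‖²`. Since `‖gₙ eᵢ - gᵢ eₙ‖ = √(gₙ² + gᵢ²) ≤ ‖g‖`, the scalings are at least
`‖g‖⁻¹`, which gives the bound.
-/

open Real Matrix

section FrameDeterminant

variable {R : Type*} [CommRing R] {m : ℕ}

/-- The transpose of the theorem's matrix before its columns are normalized. -/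
def frameMatrix (g : Fin (m + 1) → R) : Matrix (Fin (m + 1)) (Fin (m + 1)) R :=
  Matrix.of <| Fin.lastCases g fun i =>
    g (Fin.last m) • Pi.single i.castSucc 1 - g i.castSucc • Pi.single (Fin.last m) 1

variable (g : Fin (m + 1) → R)

@[simp]
lemma frameMatrix_last : frameMatrix g (Fin.last m) = g := by
  ext; simp [frameMatrix]

@[simp]
lemma frameMatrix_castSucc (i : Fin m) :
    frameMatrix g i.castSucc =
      g (Fin.last m) • Pi.single i.castSucc 1 - g i.castSucc • Pi.single (Fin.last m) 1 := by
  ext; simp [frameMatrix]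

lemma sum_smul_frameMatrix :
    ∑ k, (Fin.snoc (fun i => -g i.castSucc) (g (Fin.last m)) : Fin (m + 1) → R) k •
      frameMatrix g k = (∑ k, g k ^ 2) • Pi.single (Fin.last m) 1 := by
  ext k
  induction k using Fin.lastCases with
  | last => simp [Fin.sum_univ_castSucc, Finset.sum_apply, sq]
  | cast k => simp [Fin.sum_univ_castSucc, Finset.sum_apply, Pi.single_apply]; ring

lemma det_frameMatrix_mul_last :
    (frameMatrix g).det * g (Fin.last m) = g (Fin.last m) ^ m * ∑ k, g k ^ 2 := by
  have h := det_updateRow_sum (frameMatrix g) (Fin.last m)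
    (Fin.snoc (fun i => -g i.castSucc) (g (Fin.last m)) : Fin (m + 1) → R)
  rw [sum_smul_frameMatrix, det_of_isUpperTriangular, Fin.prod_univ_castSucc] at h
  · simpa [mul_comm] using h.symm
  · intro i j (hji : j < i)
    induction i using Fin.lastCases with
    | last => simp [hji.ne]
    | cast i =>
      have hj : j ≠ Fin.last m := (hji.trans (Fin.castSucc_lt_last i)).ne
      simp [hji.ne, hj]

end FrameDeterminant

section Euclidean

variable {ι : Type*} [Fintype ι] [DecidableEq ι] {i j : ι}

lemma EuclideanSpace.norm_smul_single_sub_smul_single (hij : i ≠ j) (a b : ℝ) :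
    ‖a • EuclideanSpace.single i (1 : ℝ) - b • EuclideanSpace.single j 1‖ = √(a ^ 2 + b ^ 2) := by
  rw [← Real.sqrt_sq (norm_nonneg _), norm_sub_sq_real]
  simp [norm_smul, inner_smul_left, inner_smul_right, EuclideanSpace.inner_single_left, hij.symm]

lemma EuclideanSpace.sq_add_sq_le_norm_sq (hij : i ≠ j) (x : EuclideanSpace ℝ ι) :
    x i ^ 2 + x j ^ 2 ≤ ‖x‖ ^ 2 := by
  rw [EuclideanSpace.real_norm_sq_eq, ← Finset.sum_pair hij (f := fun k => x k ^ 2)]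
  exact Finset.sum_le_univ_sum_of_nonneg fun _ => sq_nonneg _

lemma EuclideanSpace.norm_smul_single_sub_smul_single_le (hij : i ≠ j) (x : EuclideanSpace ℝ ι) :
    ‖x j • EuclideanSpace.single i (1 : ℝ) - x i • EuclideanSpace.single j 1‖ ≤ ‖x‖ := by
  rw [EuclideanSpace.norm_smul_single_sub_smul_single hij, Real.sqrt_le_left (norm_nonneg x),
    add_comm]
  exact EuclideanSpace.sq_add_sq_le_norm_sq hij x

end Euclidean

lemma pow_sub_one_le_pow_div_self {r : ℝ} (h₀ : 0 < r) (h₁ : r ≤ 1) (m : ℕ) :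
    r ^ (m - 1) ≤ r ^ m / r := by
  rw [le_div_iff₀ h₀, ← pow_succ]
  exact pow_le_pow_of_le_one h₀.le h₁ (by omega)

theorem stmt_5_general (m : ℕ) (g : EuclideanSpace ℝ (Fin (m + 1)))
    (hgn : 0 < g (Fin.last m)) :
    let e : Fin (m + 1) → EuclideanSpace ℝ (Fin (m + 1)) := fun i => EuclideanSpace.single i 1
    let ξ : Fin (m + 1) → EuclideanSpace ℝ (Fin (m + 1)) :=
      Fin.lastCases (‖g‖⁻¹ • g)
        (fun i => ‖g (Fin.last m) • e i.castSucc - g i.castSucc • e (Fin.last m)‖⁻¹ •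
          (g (Fin.last m) • e i.castSucc - g i.castSucc • e (Fin.last m)))
    (g (Fin.last m) / ‖g‖) ^ (m - 1) ≤ (Matrix.of fun i j => ξ j i).det ∧
      0 < (g (Fin.last m) / ‖g‖) ^ (m - 1) := by
  intro e ξ
  have hgn_le : g (Fin.last m) ≤ ‖g‖ := (le_abs_self _).trans (PiLp.norm_apply_le g _)
  have hg : 0 < ‖g‖ := hgn.trans_le hgn_le
  have hr : 0 < g (Fin.last m) / ‖g‖ := div_pos hgn hg
  refine ⟨?_, pow_pos hr _⟩
  set c : Fin (m + 1) → ℝ := Fin.lastCases ‖g‖⁻¹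
    fun i => ‖g (Fin.last m) • e i.castSucc - g i.castSucc • e (Fin.last m)‖⁻¹
  have hξ : (Matrix.of fun i j => ξ j i) = Matrix.of fun i j => c j * (frameMatrix g.ofLp)ᵀ i j := by
    ext i j
    induction j using Fin.lastCases with
    | last => simp [ξ, c]
    | cast j => simp [ξ, c, e, Pi.single_apply]
  have hc : ∀ i : Fin m, ‖g‖⁻¹ ≤ c i.castSucc := by
    intro i
    have hi := (Fin.castSucc_lt_last i).ne
    simp only [c, e, Fin.lastCases_castSucc]
    refine inv_anti₀ ?_ (EuclideanSpace.norm_smul_single_sub_smul_single_le hi g)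
    rw [EuclideanSpace.norm_smul_single_sub_smul_single hi]
    positivity
  have hdet := det_frameMatrix_mul_last g.ofLp
  rw [← EuclideanSpace.real_norm_sq_eq] at hdet
  have hD : 0 < (frameMatrix g.ofLp).det := (mul_pos_iff_of_pos_right hgn).1 (hdet ▸ by positivity)
  rw [hξ, det_mul_row, det_transpose, Fin.prod_univ_castSucc,
    show c (Fin.last m) = ‖g‖⁻¹ from Fin.lastCases_last ..]
  calc (g (Fin.last m) / ‖g‖) ^ (m - 1)
      ≤ (g (Fin.last m) / ‖g‖) ^ m / (g (Fin.last m) / ‖g‖) :=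
        pow_sub_one_le_pow_div_self hr (div_le_one_of_le₀ hgn_le hg.le) m
    _ = (∏ _ : Fin m, ‖g‖⁻¹) * ‖g‖⁻¹ * (frameMatrix g.ofLp).det := by
        rw [eq_div_of_mul_eq hgn.ne' hdet, Finset.prod_const, Finset.card_univ, Fintype.card_fin]
        field_simp
        ring
    _ ≤ (∏ i : Fin m, c i.castSucc) * ‖g‖⁻¹ * (frameMatrix g.ofLp).det := by
        gcongr with i
        exact hc i

/-- For `g ∈ ℝⁿ` with `gₙ > 0`, the determinant of the matrix with columns
`ξ⁽¹⁾, …, ξ⁽ⁿ⁾` (where `ξ⁽ⁿ⁾ = g/|g|`, `ξ⁽ⁱ⁾ = (gₙ eᵢ - gᵢ eₙ)/|gₙ eᵢ - gᵢ eₙ|`)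
is at least `(gₙ/|g|)^{n-2} > 0`. -/
theorem stmt_5 (m : ℕ) (hm : 1 ≤ m) (g : EuclideanSpace ℝ (Fin (m + 1)))
    (hgn : 0 < g (Fin.last m)) (hg : 0 < ‖g‖) :
    let e : Fin (m + 1) → EuclideanSpace ℝ (Fin (m + 1)) := fun i => EuclideanSpace.single i 1
    let ξ : Fin (m + 1) → EuclideanSpace ℝ (Fin (m + 1)) :=
      Fin.lastCases (‖g‖⁻¹ • g)
        (fun i => ‖g (Fin.last m) • e i.castSucc - g i.castSucc • e (Fin.last m)‖⁻¹ •
          (g (Fin.last m) • e i.castSucc - g i.castSucc • e (Fin.last m)))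
    (g (Fin.last m) / ‖g‖) ^ (m - 1) ≤ (Matrix.of fun i j => ξ j i).det ∧
      0 < (g (Fin.last m) / ‖g‖) ^ (m - 1) :=
  stmt_5_general m g hgn
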